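/- Let ρ : Cl(V ⊕ W) → End_ℂ(F) be the algebra homomorphism with ρ(ι(v_a ⊕ 0)) = v_a and ρ(ι(0 ⊕ w_a)) = w_a for all a ∈ H. The kernel of the ℂ-linear map Cl(V ⊕ W) → F, x ↦ ρ(x)(|0⟩), equals the left ideal of Cl(V ⊕ W) generated by the elements ι(v_i ⊕ 0) for i ∈ H⁻ and ι(0 ⊕ w_j) for j ∈ H⁺; consequently F is isomorphic as a Cl(V ⊕ W)-module to the module induced from the trivial one-dimensional module of the subalgebra Cl⁺(V ⊕ W) generated by {v_i : i ∈ H⁻} ∪ {w_j : j ∈ H⁺}. -/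

import Mathlib

/-
Modulo the left ideal `I`, every element of `Cl(V ⊕ W)` is a linear combination of normally ordered
words `v_{a₁} ⋯ v_{aₖ} w_{b₁} ⋯ w_{bₗ}` with all `aᵢ > 0 > bⱼ`, because `I` plus their span is
stable under left multiplication by the generators: a generator that does not kill the vacuum is
absorbed into the word, and one that does is moved to the right end, where it lands in `I`; each
anticommutator met on the way is a scalar times a shorter word. Up to sign (or vanishing, when a
letter repeats) a normally ordered word is the monomial of the Maya diagram `M` with particles `aᵢ`
and holes `bⱼ`, which sends `|0⟩` to a nonzero multiple of `e_M`. These images form a basis of `F`,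
so the action on `|0⟩` is onto and is injective on the span of the monomials; hence its kernel
is `I`.
-/

open scoped Classical

/-- The set of half-integers `H = ℤ + 1/2`. -/
def HalfInt : Set ℚ := {q | ∃ n : ℤ, q = (n : ℚ) + 1/2}

/-- The negative half-integers `H⁻`. -/
def Hneg : Set ℚ := {q | q ∈ HalfInt ∧ q < 0}

/-- The positive half-integers `H⁺`. -/
def Hpos : Set ℚ := {q | q ∈ HalfInt ∧ 0 < q}

/-- A Maya diagram: a set of half-integers whose symmetric difference with `H⁻` is finite. -/
structure Maya where
  carrier : Set ℚ
  subset_halfInt : carrier ⊆ HalfInt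
  finite_symmDiff : (symmDiff carrier Hneg).Finite

/-- The Fock space of semi-infinite forms: the free ℂ-vector space on Maya diagrams. -/
abbrev Fock : Type := Maya →₀ ℂ

lemma symmDiff_insert_subset (a : ℚ) (S T : Set ℚ) :
    symmDiff (insert a S) T ⊆ insert a (symmDiff S T) := by
  intro x hx
  simp only [Set.mem_symmDiff, Set.mem_insert_iff] at *
  tauto

lemma symmDiff_diff_subset (a : ℚ) (S T : Set ℚ) :
    symmDiff (S \ {a}) T ⊆ insert a (symmDiff S T) := by
  intro x hx
  simp only [Set.mem_symmDiff, Set.mem_insert_iff, Set.mem_diff,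
    Set.mem_singleton_iff] at *
  tauto

/-- Adding a half-integer to a Maya diagram. -/
def Maya.insertCell (M : Maya) (a : ℚ) (ha : a ∈ HalfInt) : Maya where
  carrier := insert a M.carrier
  subset_halfInt := by
    intro x hx
    rcases hx with rfl | hx
    · exact ha
    · exact M.subset_halfInt hx
  finite_symmDiff :=
    Set.Finite.subset (M.finite_symmDiff.insert a) (symmDiff_insert_subset a _ _)

/-- Removing a half-integer from a Maya diagram. -/
def Maya.eraseCell (M : Maya) (a : ℚ) : Maya where
  carrier := M.carrier \ {a}
  subset_halfInt := fun _ hx => M.subset_halfInt hx.1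
  finite_symmDiff :=
    Set.Finite.subset (M.finite_symmDiff.insert a) (symmDiff_diff_subset a _ _)

/-- The sign `(-1)^{#{x ∈ S : x > a}}`. -/
noncomputable def sgn (S : Set ℚ) (a : ℚ) : ℂ := (-1) ^ (S ∩ Set.Ioi a).ncard

/-- The creation operator `v_a` (exterior multiplication by `v_a`). -/
noncomputable def creation (a : ↥HalfInt) : Fock →ₗ[ℂ] Fock :=
  Finsupp.lift Fock ℂ Maya fun M =>
    if (a : ℚ) ∈ M.carrier then 0
    else sgn M.carrier a • Finsupp.single (M.insertCell a a.2) 1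

/-- The annihilation operator `w_a` (contraction by `w_a`). -/
noncomputable def annihilation (a : ↥HalfInt) : Fock →ₗ[ℂ] Fock :=
  Finsupp.lift Fock ℂ Maya fun M =>
    if (a : ℚ) ∈ M.carrier then sgn M.carrier a • Finsupp.single (M.eraseCell a) 1
    else 0

/-- The Maya diagram `H⁻` of the vacuum. -/
def mayaVac : Maya where
  carrier := Hneg
  subset_halfInt := fun _ hx => hx.1
  finite_symmDiff := by
    simp only [symmDiff_self]
    exact Set.finite_empty

/-- The vacuum vector `|0⟩ = e_{H⁻} = v_{−1/2} ∧ v_{−3/2} ∧ ⋯`. -/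
noncomputable def vacuum : Fock := Finsupp.single mayaVac 1

/-- The vector space `V`, free on basis `(v_a)_{a ∈ H}`. -/
abbrev Vsp : Type := ↥HalfInt →₀ ℂ

/-- The vector space `W`, free on basis `(w_a)_{a ∈ H}`. -/
abbrev Wsp : Type := ↥HalfInt →₀ ℂ

/-- The pairing `(v, w) = Σ_a x_a y_a` between `V` and `W`. -/
noncomputable def pairVW : Vsp →ₗ[ℂ] Wsp →ₗ[ℂ] ℂ :=
  Finsupp.lsum ℂ fun a => LinearMap.smulRight (LinearMap.id : ℂ →ₗ[ℂ] ℂ) (Finsupp.lapply a)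

/-- The bilinear map `B((x,y),(x',y')) = Σ_a x_a y'_a` on `V ⊕ W`. -/
noncomputable def bilinVW : (Vsp × Wsp) →ₗ[ℂ] (Vsp × Wsp) →ₗ[ℂ] ℂ :=
  (pairVW.comp (LinearMap.fst ℂ Vsp Wsp)).compl₂ (LinearMap.snd ℂ Vsp Wsp)

/-- The quadratic form `Q(x ⊕ y) = Σ_a x_a y_a` on `V ⊕ W`, so that in
`CliffordAlgebra Qform` the relations `v v' + v' v = 0`, `w w' + w' w = 0`,
`v w + w v = (v,w)·1` hold. -/
noncomputable def Qform : QuadraticForm ℂ (Vsp × Wsp) :=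
  LinearMap.BilinMap.toQuadraticMap bilinVW

/-- The "act on the vacuum" linear map `x ↦ ρ(x)|0⟩`. -/
noncomputable def actVac (ρ : CliffordAlgebra Qform →ₐ[ℂ] Module.End ℂ Fock) :
    CliffordAlgebra Qform →ₗ[ℂ] Fock :=
  (LinearMap.applyₗ vacuum).comp ρ.toLinearMap

section Anticommuting

variable {ι R : Type*} [Ring R] {f : ι → R}

theorem mul_prod_map_of_anticomm (hf : ∀ a b, f a * f b = -(f b * f a)) (a : ι) (L : List ι) :
    f a * (L.map f).prod = (-1 : ℤ) ^ L.length • ((L.map f).prod * f a) := by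
  induction L with
  | nil => simp
  | cons b L ih =>
    simp only [List.map_cons, List.prod_cons, List.length_cons, pow_succ]
    rw [← mul_assoc, hf, neg_mul, mul_assoc, ih, mul_smul_comm, mul_neg_one, neg_smul, mul_assoc]

theorem prod_map_eq_zero_of_not_nodup (hf : ∀ a b, f a * f b = -(f b * f a))
    (hsq : ∀ a, f a * f a = 0) {L : List ι} (hL : ¬L.Nodup) : (L.map f).prod = 0 := by
  induction L with
  | nil => exact absurd List.nodup_nil hL
  | cons a L ih =>
    rw [List.nodup_cons, not_and_or, not_not] at hL
    rw [List.map_cons, List.prod_cons]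
    rcases hL with ha | hL
    · obtain ⟨s, t, rfl⟩ := List.append_of_mem ha
      rw [List.map_append, List.prod_append, List.map_cons, List.prod_cons, ← mul_assoc,
        mul_prod_map_of_anticomm hf, smul_mul_assoc, mul_assoc, ← mul_assoc (f a), hsq]
      simp
    · rw [ih hL, mul_zero]

theorem List.Perm.prod_map_of_anticomm (hf : ∀ a b, f a * f b = -(f b * f a))
    {L L' : List ι} (h : L.Perm L') :
    ∃ n : ℕ, (L.map f).prod = (-1 : ℤ) ^ n • (L'.map f).prod := by
  induction h with
  | nil => exact ⟨0, by simp⟩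
  | cons x _ ih =>
    obtain ⟨n, hn⟩ := ih
    exact ⟨n, by simp only [List.map_cons, List.prod_cons, hn]; noncomm_ring⟩
  | swap x y l =>
    exact ⟨1, by simp only [List.map_cons, List.prod_cons, ← mul_assoc, hf y x]; noncomm_ring⟩
  | trans _ _ ih₁ ih₂ =>
    obtain ⟨m, hm⟩ := ih₁
    obtain ⟨n, hn⟩ := ih₂
    exact ⟨m + n, by rw [hm, hn, pow_add, mul_smul]⟩

end Anticommuting

section Words

variable (k : Type*) {ι R : Type*} [CommRing k] [Ring R] [Algebra k R]

def wordSpan (f : ι → R) (P : ι → Prop) : Submodule k R :=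
  Submodule.span k {x | ∃ L : List ι, (∀ b ∈ L, P b) ∧ (L.map f).prod = x}

variable {k} {f : ι → R} {P : ι → Prop}

theorem prod_map_mem_wordSpan {L : List ι} (hL : ∀ b ∈ L, P b) :
    (L.map f).prod ∈ wordSpan k f P :=
  Submodule.subset_span ⟨L, hL, rfl⟩

theorem mul_mem_wordSpan {a : ι} (ha : P a) {x : R} (hx : x ∈ wordSpan k f P) :
    f a * x ∈ wordSpan k f P := by
  refine (Submodule.span_le (p := (wordSpan k f P).comap (LinearMap.mulLeft k (f a)))).mpr ?_ hx
  rintro _ ⟨L, hL, rfl⟩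
  exact prod_map_mem_wordSpan (L := a :: L) (by simpa [ha] using hL)

/-- Each letter that `x` passes contributes its scalar anticommutator times a shorter word. -/
theorem mul_prod_map_sub_mem_wordSpan {x : R}
    (hx : ∀ b, P b → x * f b + f b * x ∈ Set.range (algebraMap k R))
    {L : List ι} (hL : ∀ b ∈ L, P b) :
    x * (L.map f).prod - (-1 : ℤ) ^ L.length • ((L.map f).prod * x) ∈ wordSpan k f P := by
  induction L with
  | nil => simp
  | cons b L ih =>
    have hb : P b := hL b (List.mem_cons_self ..)
    have hL' : ∀ c ∈ L, P c := fun c hc => hL c (List.mem_cons_of_mem b hc)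
    obtain ⟨c, hc⟩ := hx b hb
    have hsplit : x * ((b :: L).map f).prod
          - (-1 : ℤ) ^ (b :: L).length • (((b :: L).map f).prod * x)
        = c • (L.map f).prod
          - f b * (x * (L.map f).prod - (-1 : ℤ) ^ L.length • ((L.map f).prod * x)) := by
      rw [Algebra.smul_def c, hc]
      simp only [List.map_cons, List.prod_cons, List.length_cons, pow_succ, mul_neg_one, neg_smul]
      noncomm_ring
    rw [hsplit]
    exact sub_mem (Submodule.smul_mem _ c (prod_map_mem_wordSpan hL'))
      (mul_mem_wordSpan hb (ih hL'))

end Words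

local notation "Cl" => CliffordAlgebra Qform

theorem Qform_inl (x : Vsp) : Qform (x, 0) = 0 := map_zero (pairVW x)

theorem Qform_inr (y : Wsp) : Qform (0, y) = 0 := by
  simp [Qform, bilinVW, LinearMap.BilinMap.toQuadraticMap_apply]

noncomputable def vCl (a : ↥HalfInt) : Cl := CliffordAlgebra.ι Qform (Finsupp.single a 1, 0)

noncomputable def wCl (a : ↥HalfInt) : Cl := CliffordAlgebra.ι Qform (0, Finsupp.single a 1)

theorem vCl_anticomm (a b : ↥HalfInt) : vCl a * vCl b = -(vCl b * vCl a) :=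
  CliffordAlgebra.ι_mul_ι_comm_of_isOrtho <| by
    simp only [QuadraticMap.IsOrtho, Prod.mk_add_mk, add_zero, Qform_inl]

theorem wCl_anticomm (a b : ↥HalfInt) : wCl a * wCl b = -(wCl b * wCl a) :=
  CliffordAlgebra.ι_mul_ι_comm_of_isOrtho <| by
    simp only [QuadraticMap.IsOrtho, Prod.mk_add_mk, add_zero, Qform_inr]

theorem vCl_mul_self (a : ↥HalfInt) : vCl a * vCl a = 0 := by
  rw [vCl, CliffordAlgebra.ι_sq_scalar, Qform_inl, map_zero]

theorem wCl_mul_self (a : ↥HalfInt) : wCl a * wCl a = 0 := by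
  rw [wCl, CliffordAlgebra.ι_sq_scalar, Qform_inr, map_zero]

theorem ι_mem_span_vCl_wCl (m : Vsp × Wsp) :
    CliffordAlgebra.ι Qform m ∈ Submodule.span ℂ (Set.range vCl ∪ Set.range wCl) := by
  have hm : m ∈ Submodule.span ℂ
      (LinearMap.inl ℂ Vsp Wsp '' Set.range (Finsupp.single · 1) ∪
        LinearMap.inr ℂ Vsp Wsp '' Set.range (Finsupp.single · 1)) := by
    rw [LinearMap.span_inl_union_inr, ← Finsupp.coe_basisSingleOne, Module.Basis.span_eq,
      Submodule.prod_top]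
    trivial
  have := Submodule.mem_map_of_mem (f := (CliffordAlgebra.ι Qform)) hm
  rwa [Submodule.map_span, Set.image_union, ← Set.range_comp, ← Set.range_comp,
    ← Set.range_comp, ← Set.range_comp] at this

theorem ne_zero_of_mem_halfInt {q : ℚ} (hq : q ∈ HalfInt) : q ≠ 0 := by
  obtain ⟨n, rfl⟩ := hq
  intro h
  have h2 : ((2 * n + 1 : ℤ) : ℚ) = 0 := by push_cast; linarith
  have h3 : 2 * n + 1 = 0 := by exact_mod_cast h2
  omega

namespace Maya

theorem ext_halfInt {M N : Maya}
    (h : ∀ a : ↥HalfInt, (a : ℚ) ∈ M.carrier ↔ (a : ℚ) ∈ N.carrier) : M = N := by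
  have hMN : M.carrier = N.carrier := by
    ext q
    by_cases hq : q ∈ HalfInt
    · exact h ⟨q, hq⟩
    · exact iff_of_false (fun h => hq (M.subset_halfInt h)) (fun h => hq (N.subset_halfInt h))
  cases M
  cases N
  congr

theorem finite_halfInt_symmDiff (M : Maya) :
    {a : ↥HalfInt | (a : ℚ) ∈ symmDiff M.carrier Hneg}.Finite :=
  M.finite_symmDiff.preimage Subtype.val_injective.injOn

noncomputable def particles (M : Maya) : Finset ↥HalfInt :=
  (M.finite_halfInt_symmDiff.subset fun a (ha : (a : ℚ) ∈ M.carrier ∧ 0 < (a : ℚ)) =>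
    Or.inl ⟨ha.1, fun h => h.2.not_gt ha.2⟩).toFinset

noncomputable def holes (M : Maya) : Finset ↥HalfInt :=
  (M.finite_halfInt_symmDiff.subset fun a (ha : (a : ℚ) ∉ M.carrier ∧ (a : ℚ) < 0) =>
    Or.inr ⟨⟨a.2, ha.2⟩, ha.1⟩).toFinset

@[simp]
theorem mem_particles {M : Maya} {a : ↥HalfInt} :
    a ∈ M.particles ↔ (a : ℚ) ∈ M.carrier ∧ 0 < (a : ℚ) :=
  Set.Finite.mem_toFinset _

@[simp]
theorem mem_holes {M : Maya} {a : ↥HalfInt} :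
    a ∈ M.holes ↔ (a : ℚ) ∉ M.carrier ∧ (a : ℚ) < 0 :=
  Set.Finite.mem_toFinset _

theorem mem_carrier_iff (M : Maya) (a : ↥HalfInt) :
    (a : ℚ) ∈ M.carrier ↔ ((a : ℚ) ∈ Hneg ∧ a ∉ M.holes) ∨ a ∈ M.particles := by
  rcases (ne_zero_of_mem_halfInt a.2).lt_or_gt with h | h <;>
    simp [Hneg, a.2, h, h.not_gt]

def ofParticlesHoles (A B : Finset ↥HalfInt) : Maya where
  carrier := (Hneg \ Subtype.val '' (B : Set ↥HalfInt)) ∪ Subtype.val '' (A : Set ↥HalfInt)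
  subset_halfInt := by
    rintro q (⟨hq, -⟩ | ⟨a, -, rfl⟩)
    exacts [hq.1, a.2]
  finite_symmDiff := by
    refine ((A.finite_toSet.image Subtype.val).union (B.finite_toSet.image Subtype.val)).subset ?_
    rintro q (⟨⟨hq, -⟩ | hq, hq'⟩ | ⟨hq, hq'⟩)
    · exact absurd hq hq'
    · exact Or.inl hq
    · by_contra hB
      exact hq' (Or.inl ⟨hq, fun h => hB (Or.inr h)⟩)

@[simp]
theorem mem_carrier_ofParticlesHoles {A B : Finset ↥HalfInt} {a : ↥HalfInt} :
    (a : ℚ) ∈ (ofParticlesHoles A B).carrier ↔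
      ((a : ℚ) ∈ Hneg ∧ a ∉ B) ∨ a ∈ A := by
  simp [ofParticlesHoles, Subtype.val_injective.mem_set_image]

variable {A B : Finset ↥HalfInt}

theorem particles_ofParticlesHoles (hA : ∀ a ∈ A, 0 < (a : ℚ)) :
    (ofParticlesHoles A B).particles = A := by
  ext a
  simp only [mem_particles, mem_carrier_ofParticlesHoles, Hneg]
  constructor
  · rintro ⟨⟨⟨-, h⟩, -⟩ | h, h'⟩
    exacts [absurd h h'.not_gt, h]
  · intro h
    exact ⟨Or.inr h, hA a h⟩

theorem holes_ofParticlesHoles (hA : ∀ a ∈ A, 0 < (a : ℚ)) (hB : ∀ b ∈ B, (b : ℚ) < 0) :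
    (ofParticlesHoles A B).holes = B := by
  ext b
  simp only [mem_holes, mem_carrier_ofParticlesHoles]
  constructor
  · rintro ⟨h, h'⟩
    by_contra hb
    exact h (Or.inl ⟨⟨b.2, h'⟩, hb⟩)
  · intro h
    exact ⟨by rintro (⟨-, h'⟩ | h'); exacts [h' h, (hA b h').not_gt (hB b h)], hB b h⟩

end Maya

noncomputable def Maya.monomial (M : Maya) : Cl :=
  (M.particles.toList.map vCl).prod * (M.holes.toList.map wCl).prod

theorem prod_mul_prod_mem_span_monomial {A B : List ↥HalfInt} (hA : ∀ a ∈ A, 0 < (a : ℚ))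
    (hB : ∀ b ∈ B, (b : ℚ) < 0) :
    (A.map vCl).prod * (B.map wCl).prod ∈ Submodule.span ℂ (Set.range Maya.monomial) := by
  by_cases hnA : A.Nodup
  swap
  · rw [prod_map_eq_zero_of_not_nodup vCl_anticomm vCl_mul_self hnA, zero_mul]
    exact zero_mem _
  by_cases hnB : B.Nodup
  swap
  · rw [prod_map_eq_zero_of_not_nodup wCl_anticomm wCl_mul_self hnB, mul_zero]
    exact zero_mem _
  have hA' : ∀ a ∈ A.toFinset, 0 < (a : ℚ) := by simpa using hA
  have hB' : ∀ b ∈ B.toFinset, (b : ℚ) < 0 := by simpa using hB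
  set M := Maya.ofParticlesHoles A.toFinset B.toFinset
  obtain ⟨m, hm⟩ :=
    List.Perm.prod_map_of_anticomm vCl_anticomm (L := A) (L' := M.particles.toList)
    (by rw [Maya.particles_ofParticlesHoles hA']; exact (List.toFinset_toList hnA).symm)
  obtain ⟨n, hn⟩ :=
    List.Perm.prod_map_of_anticomm wCl_anticomm (L := B) (L' := M.holes.toList)
    (by rw [Maya.holes_ofParticlesHoles hA' hB']; exact (List.toFinset_toList hnB).symm)
  rw [hm, hn, smul_mul_assoc, mul_smul_comm, smul_smul]
  exact zsmul_mem (Submodule.subset_span (Set.mem_range_self M)) _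

noncomputable def vacIdeal : Submodule Cl Cl :=
  Submodule.span (CliffordAlgebra Qform)
    ({x | ∃ i : ↥HalfInt, (i : ℚ) < 0 ∧
        x = CliffordAlgebra.ι Qform (Finsupp.single i 1, 0)} ∪
     {x | ∃ j : ↥HalfInt, 0 < (j : ℚ) ∧
        x = CliffordAlgebra.ι Qform (0, Finsupp.single j 1)})

theorem vCl_mem_vacIdeal {a : ↥HalfInt} (ha : (a : ℚ) < 0) : vCl a ∈ vacIdeal :=
  Submodule.subset_span (Or.inl ⟨a, ha, rfl⟩)

theorem wCl_mem_vacIdeal {a : ↥HalfInt} (ha : 0 < (a : ℚ)) : wCl a ∈ vacIdeal :=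
  Submodule.subset_span (Or.inr ⟨a, ha, rfl⟩)

noncomputable def normalWords : Submodule ℂ Cl :=
  wordSpan ℂ vCl (fun a => 0 < (a : ℚ)) * wordSpan ℂ wCl (fun b => (b : ℚ) < 0)

theorem mul_mem_sup_normalWords {g y : Cl}
    (hg : ∀ A B : List ↥HalfInt,
      (∀ a ∈ A, 0 < (a : ℚ)) → (∀ b ∈ B, (b : ℚ) < 0) →
      g * ((A.map vCl).prod * (B.map wCl).prod) ∈ vacIdeal.restrictScalars ℂ ⊔ normalWords)
    (hy : y ∈ vacIdeal.restrictScalars ℂ ⊔ normalWords) :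
    g * y ∈ vacIdeal.restrictScalars ℂ ⊔ normalWords := by
  obtain ⟨i, hi, n, hn, rfl⟩ := Submodule.mem_sup.mp hy
  rw [mul_add]
  refine add_mem (Submodule.mem_sup_left (vacIdeal.smul_mem g hi)) ?_
  rw [normalWords, wordSpan, wordSpan, Submodule.span_mul_span] at hn
  refine (Submodule.span_le (p := (vacIdeal.restrictScalars ℂ ⊔ normalWords).comap
    (LinearMap.mulLeft ℂ g))).mpr ?_ hn
  rintro _ ⟨_, ⟨A, hA, rfl⟩, _, ⟨B, hB, rfl⟩, rfl⟩
  exact hg A B hA hB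

theorem CliffordAlgebra.ι_mul_ι_add_swap_mem_range {R M : Type*} [CommRing R] [AddCommGroup M]
    [Module R M] {Q : QuadraticForm R M} (m m' : M) :
    ι Q m * ι Q m' + ι Q m' * ι Q m ∈ Set.range (algebraMap R (CliffordAlgebra Q)) :=
  ⟨_, (ι_mul_ι_add_swap m m').symm⟩

section NormalOrdering

variable {A B : List ↥HalfInt} (hA : ∀ a ∈ A, 0 < (a : ℚ)) (hB : ∀ b ∈ B, (b : ℚ) < 0)
include hA hB

theorem vCl_mul_mem_sup_normalWords (a : ↥HalfInt) :
    vCl a * ((A.map vCl).prod * (B.map wCl).prod) ∈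
      vacIdeal.restrictScalars ℂ ⊔ normalWords := by
  rcases (ne_zero_of_mem_halfInt a.2).lt_or_gt with ha | ha
  · have hcomm := mul_prod_map_sub_mem_wordSpan (k := ℂ) (f := wCl) (x := vCl a)
      (fun b _ => CliffordAlgebra.ι_mul_ι_add_swap_mem_range _ (0, Finsupp.single b 1)) hB
    have hsplit : vCl a * ((A.map vCl).prod * (B.map wCl).prod) = (-1 : ℤ) ^ A.length •
        ((A.map vCl).prod * (vCl a * (B.map wCl).prod
            - (-1 : ℤ) ^ B.length • ((B.map wCl).prod * vCl a))
          + (-1 : ℤ) ^ B.length • ((A.map vCl).prod * (B.map wCl).prod * vCl a)) := by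
      rw [← mul_assoc, mul_prod_map_of_anticomm vCl_anticomm]
      noncomm_ring
    rw [hsplit]
    exact zsmul_mem (add_mem
      (Submodule.mem_sup_right (Submodule.mul_mem_mul (prod_map_mem_wordSpan hA) hcomm))
      (Submodule.mem_sup_left (zsmul_mem (vacIdeal.smul_mem _ (vCl_mem_vacIdeal ha)) _))) _
  · rw [← mul_assoc]
    refine Submodule.mem_sup_right (Submodule.mul_mem_mul ?_ (prod_map_mem_wordSpan hB))
    exact prod_map_mem_wordSpan (L := a :: A) (by simpa [ha] using hA)

theorem wCl_mul_mem_sup_normalWords (a : ↥HalfInt) :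
    wCl a * ((A.map vCl).prod * (B.map wCl).prod) ∈
      vacIdeal.restrictScalars ℂ ⊔ normalWords := by
  have hcomm := mul_prod_map_sub_mem_wordSpan (k := ℂ) (f := vCl) (x := wCl a)
    (fun b _ => CliffordAlgebra.ι_mul_ι_add_swap_mem_range _ (Finsupp.single b 1, 0)) hA
  have hsplit : wCl a * ((A.map vCl).prod * (B.map wCl).prod) =
      (wCl a * (A.map vCl).prod - (-1 : ℤ) ^ A.length • ((A.map vCl).prod * wCl a))
          * (B.map wCl).prod
        + (-1 : ℤ) ^ A.length • ((A.map vCl).prod * (wCl a * (B.map wCl).prod)) := by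
    noncomm_ring
  rw [hsplit]
  refine add_mem (Submodule.mem_sup_right
    (Submodule.mul_mem_mul hcomm (prod_map_mem_wordSpan hB))) (zsmul_mem ?_ _)
  rcases (ne_zero_of_mem_halfInt a.2).lt_or_gt with ha | ha
  · refine Submodule.mem_sup_right (Submodule.mul_mem_mul (prod_map_mem_wordSpan hA) ?_)
    exact prod_map_mem_wordSpan (L := a :: B) (by simpa [ha] using hB)
  · rw [mul_prod_map_of_anticomm wCl_anticomm, mul_smul_comm, ← mul_assoc]
    exact Submodule.mem_sup_left (zsmul_mem (vacIdeal.smul_mem _ (wCl_mem_vacIdeal ha)) _)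

end NormalOrdering

theorem adjoin_vCl_wCl : Algebra.adjoin ℂ (Set.range vCl ∪ Set.range wCl) = ⊤ := by
  rw [eq_top_iff, ← CliffordAlgebra.adjoin_range_ι, Algebra.adjoin_le_iff]
  rintro _ ⟨m, rfl⟩
  exact Algebra.span_le_adjoin ℂ _ (ι_mem_span_vCl_wCl m)

theorem vacIdeal_sup_normalWords : vacIdeal.restrictScalars ℂ ⊔ normalWords = ⊤ := by
  set J := vacIdeal.restrictScalars ℂ ⊔ normalWords
  have hJ : ∀ x : Cl, ∀ y ∈ J, x * y ∈ J := by
    intro x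
    induction (adjoin_vCl_wCl ▸ Algebra.mem_top : x ∈ Algebra.adjoin ℂ _)
      using Algebra.adjoin_induction with
    | mem x hx =>
      rcases hx with ⟨a, rfl⟩ | ⟨a, rfl⟩
      · exact fun y => mul_mem_sup_normalWords fun A B hA hB =>
          vCl_mul_mem_sup_normalWords hA hB a
      · exact fun y => mul_mem_sup_normalWords fun A B hA hB =>
          wCl_mul_mem_sup_normalWords hA hB a
    | algebraMap r => exact fun y hy => by rw [← Algebra.smul_def]; exact J.smul_mem r hy
    | add x x' _ _ hx hx' => exact fun y hy => by rw [add_mul]; exact add_mem (hx y hy) (hx' y hy)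
    | mul x x' _ _ hx hx' => exact fun y hy => by rw [mul_assoc]; exact hx _ (hx' y hy)
  have h1 : (1 : Cl) ∈ J := by
    have h := Submodule.mul_mem_mul
      (prod_map_mem_wordSpan (k := ℂ) (f := vCl) (P := fun a => 0 < (a : ℚ)) (L := []) nofun)
      (prod_map_mem_wordSpan (k := ℂ) (f := wCl) (P := fun b => (b : ℚ) < 0) (L := []) nofun)
    rw [List.map_nil, List.map_nil, List.prod_nil, mul_one] at h
    exact Submodule.mem_sup_right h
  exact eq_top_iff.mpr fun x _ => by simpa using hJ x 1 h1

theorem sgn_ne_zero (S : Set ℚ) (a : ℚ) : sgn S a ≠ 0 :=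
  pow_ne_zero _ (neg_ne_zero.mpr one_ne_zero)

theorem creation_single (a : ↥HalfInt) (M : Maya) :
    creation a (Finsupp.single M 1) =
      if (a : ℚ) ∈ M.carrier then 0
      else sgn M.carrier a • Finsupp.single (M.insertCell a a.2) 1 := by
  rw [creation, Finsupp.lift_apply, Finsupp.sum_single_index (by simp), one_smul]

theorem annihilation_single (a : ↥HalfInt) (M : Maya) :
    annihilation a (Finsupp.single M 1) =
      if (a : ℚ) ∈ M.carrier then sgn M.carrier a • Finsupp.single (M.eraseCell a) 1
      else 0 := by
  rw [annihilation, Finsupp.lift_apply, Finsupp.sum_single_index (by simp), one_smul]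

theorem creation_prod_single {L : List ↥HalfInt} (hL : L.Nodup) {N : Maya}
    (hN : ∀ b ∈ L, (b : ℚ) ∉ N.carrier) :
    ∃ c : ℂ, c ≠ 0 ∧ ∃ N' : Maya,
      (∀ a : ↥HalfInt, (a : ℚ) ∈ N'.carrier ↔ (a : ℚ) ∈ N.carrier ∨ a ∈ L) ∧
      (L.map creation).prod (Finsupp.single N 1) = c • Finsupp.single N' 1 := by
  induction L with
  | nil => exact ⟨1, one_ne_zero, N, by simp, by simp⟩
  | cons b L ih =>
    obtain ⟨c, hc, N', hN', h⟩ := ih hL.of_cons fun a ha => hN a (List.mem_cons_of_mem b ha)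
    have hb : (b : ℚ) ∉ N'.carrier := by
      rw [hN']
      exact not_or.mpr ⟨hN b List.mem_cons_self, (List.nodup_cons.mp hL).1⟩
    refine ⟨c * sgn N'.carrier b, mul_ne_zero hc (sgn_ne_zero _ _), N'.insertCell b b.2,
      fun a => ?_, ?_⟩
    · simp only [Maya.insertCell, Set.mem_insert_iff, hN', List.mem_cons, Subtype.coe_inj]
      tauto
    · rw [List.map_cons, List.prod_cons, Module.End.mul_apply, h, map_smul, creation_single,
        if_neg hb, smul_smul]

theorem annihilation_prod_single {L : List ↥HalfInt} (hL : L.Nodup) {N : Maya}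
    (hN : ∀ b ∈ L, (b : ℚ) ∈ N.carrier) :
    ∃ c : ℂ, c ≠ 0 ∧ ∃ N' : Maya,
      (∀ a : ↥HalfInt, (a : ℚ) ∈ N'.carrier ↔ (a : ℚ) ∈ N.carrier ∧ a ∉ L) ∧
      (L.map annihilation).prod (Finsupp.single N 1) = c • Finsupp.single N' 1 := by
  induction L with
  | nil => exact ⟨1, one_ne_zero, N, by simp, by simp⟩
  | cons b L ih =>
    obtain ⟨c, hc, N', hN', h⟩ := ih hL.of_cons fun a ha => hN a (List.mem_cons_of_mem b ha)
    have hb : (b : ℚ) ∈ N'.carrier :=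
      (hN' b).mpr ⟨hN b List.mem_cons_self, (List.nodup_cons.mp hL).1⟩
    refine ⟨c * sgn N'.carrier b, mul_ne_zero hc (sgn_ne_zero _ _), N'.eraseCell b,
      fun a => ?_, ?_⟩
    · simp only [Maya.eraseCell, Set.mem_sdiff, Set.mem_singleton_iff, hN', List.mem_cons,
        Subtype.coe_inj]
      tauto
    · rw [List.map_cons, List.prod_cons, Module.End.mul_apply, h, map_smul, annihilation_single,
        if_pos hb, smul_smul]

theorem actVac_apply (ρ : Cl →ₐ[ℂ] Module.End ℂ Fock) (x : Cl) :
    actVac ρ x = ρ x vacuum :=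
  rfl

theorem actVac_mul (ρ : Cl →ₐ[ℂ] Module.End ℂ Fock) (x y : Cl) :
    actVac ρ (x * y) = ρ x (actVac ρ y) := by
  rw [actVac_apply, actVac_apply, map_mul, Module.End.mul_apply]

section Representation

variable {ρ : Cl →ₐ[ℂ] Module.End ℂ Fock}
  (hv : ∀ a : ↥HalfInt, ρ (CliffordAlgebra.ι Qform (Finsupp.single a 1, 0)) = creation a)
  (hw : ∀ a : ↥HalfInt, ρ (CliffordAlgebra.ι Qform (0, Finsupp.single a 1)) = annihilation a)
include hv hw

theorem actVac_monomial (M : Maya) :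
    ∃ c : ℂˣ, actVac ρ M.monomial = c • Finsupp.single M 1 := by
  have hρ : ρ M.monomial =
      (M.particles.toList.map creation).prod * (M.holes.toList.map annihilation).prod := by
    rw [Maya.monomial, map_mul, map_list_prod, map_list_prod, List.map_map, List.map_map]
    congr 2
    exacts [List.map_congr_left fun a _ => hv a, List.map_congr_left fun a _ => hw a]
  obtain ⟨c, hc, N₁, hN₁, h₁⟩ :=
    annihilation_prod_single M.holes.nodup_toList (N := mayaVac)
    fun b hb => ⟨b.2, (Maya.mem_holes.mp (Finset.mem_toList.mp hb)).2⟩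
  obtain ⟨d, hd, N₂, hN₂, h₂⟩ := creation_prod_single M.particles.nodup_toList (N := N₁)
    fun a ha h => (Maya.mem_particles.mp (Finset.mem_toList.mp ha)).2.not_gt ((hN₁ a).mp h).1.2
  have hM : N₂ = M := Maya.ext_halfInt fun a => by
    rw [hN₂, hN₁, M.mem_carrier_iff, Finset.mem_toList, Finset.mem_toList]
    rfl
  refine ⟨Units.mk0 (c * d) (mul_ne_zero hc hd), ?_⟩
  rw [actVac_apply, hρ, Module.End.mul_apply, vacuum, h₁, map_smul, h₂, smul_smul, hM,
    Units.smul_def, Units.val_mk0]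

theorem exists_basis_actVac_monomial :
    ∃ b : Module.Basis Maya ℂ Fock, ⇑b = fun M => actVac ρ M.monomial := by
  choose w hw using actVac_monomial hv hw
  refine ⟨Finsupp.basisSingleOne.unitsSMul w, funext fun M => ?_⟩
  rw [Module.Basis.unitsSMul_apply, Finsupp.coe_basisSingleOne, hw]

theorem actVac_surjective : Function.Surjective (actVac ρ) := by
  obtain ⟨b, hb⟩ := exists_basis_actVac_monomial hv hw
  rw [← LinearMap.range_eq_top, eq_top_iff, ← b.span_eq, Submodule.span_le, hb]
  rintro _ ⟨M, rfl⟩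
  exact LinearMap.mem_range_self _ _

theorem eq_zero_of_mem_span_monomial {x : Cl}
    (hx : x ∈ Submodule.span ℂ (Set.range Maya.monomial))
    (h0 : actVac ρ x = 0) : x = 0 := by
  obtain ⟨b, hb⟩ := exists_basis_actVac_monomial hv hw
  rw [← Finsupp.range_linearCombination] at hx
  obtain ⟨l, rfl⟩ := hx
  rw [Finsupp.apply_linearCombination] at h0
  have hl : l = 0 := b.linearIndependent <| by
    rw [map_zero, hb]
    exact h0
  rw [hl, map_zero]

theorem vacIdeal_le_ker {x : Cl} (hx : x ∈ vacIdeal) : actVac ρ x = 0 := by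
  induction hx using Submodule.span_induction with
  | mem x hx =>
    rcases hx with ⟨i, hi, rfl⟩ | ⟨j, hj, rfl⟩
    · rw [actVac_apply, hv, vacuum, creation_single,
        if_pos (show (i : ℚ) ∈ mayaVac.carrier from ⟨i.2, hi⟩)]
    · rw [actVac_apply, hw, vacuum, annihilation_single,
        if_neg (show (j : ℚ) ∉ mayaVac.carrier from fun h => h.2.not_gt hj)]
  | zero => exact map_zero _
  | add x y _ _ hx hy => rw [map_add, hx, hy, add_zero]
  | smul c x _ hx =>
    rw [smul_eq_mul, actVac_mul, hx, map_zero]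

end Representation

theorem normalWords_le_span_monomial :
    normalWords ≤ Submodule.span ℂ (Set.range Maya.monomial) := by
  rw [normalWords, wordSpan, wordSpan, Submodule.span_mul_span, Submodule.span_le]
  rintro _ ⟨_, ⟨A, hA, rfl⟩, _, ⟨B, hB, rfl⟩, rfl⟩
  exact prod_mul_prod_mem_span_monomial hA hB

theorem vacIdeal_sup_span_monomial :
    vacIdeal.restrictScalars ℂ ⊔ Submodule.span ℂ (Set.range Maya.monomial) = ⊤ :=
  top_le_iff.mp (vacIdeal_sup_normalWords ▸ sup_le_sup_left normalWords_le_span_monomial _)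

/-- for the Clifford action `ρ` on the Fock space, the kernel of
`x ↦ ρ(x)|0⟩` is the left ideal of `Cl(V ⊕ W)` generated by the elements
`ι(v_i ⊕ 0)`, `i ∈ H⁻`, and `ι(0 ⊕ w_j)`, `j ∈ H⁺`; moreover the map is
surjective, so `F` is the module induced from the trivial module of the
subalgebra generated by `{v_i : i ∈ H⁻} ∪ {w_j : j ∈ H⁺}`. -/
theorem kernel_of_vacuum_action (ρ : CliffordAlgebra Qform →ₐ[ℂ] Module.End ℂ Fock)
    (hv : ∀ a : ↥HalfInt,
      ρ (CliffordAlgebra.ι Qform (Finsupp.single a 1, 0)) = creation a)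
    (hw : ∀ a : ↥HalfInt,
      ρ (CliffordAlgebra.ι Qform (0, Finsupp.single a 1)) = annihilation a) :
    (LinearMap.ker (actVac ρ) : Set (CliffordAlgebra Qform)) =
      (Submodule.span (CliffordAlgebra Qform)
        ({x | ∃ i : ↥HalfInt, (i : ℚ) < 0 ∧
            x = CliffordAlgebra.ι Qform (Finsupp.single i 1, 0)} ∪
         {x | ∃ j : ↥HalfInt, 0 < (j : ℚ) ∧
            x = CliffordAlgebra.ι Qform (0, Finsupp.single j 1)}) :
          Set (CliffordAlgebra Qform)) ∧
    Function.Surjective (actVac ρ) := by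
  refine ⟨Set.ext fun x => ⟨fun hx => ?_, vacIdeal_le_ker hv hw⟩, actVac_surjective hv hw⟩
  obtain ⟨i, hi, k, hk, rfl⟩ := Submodule.mem_sup.mp
    (vacIdeal_sup_span_monomial ▸ Submodule.mem_top (x := x))
  have hk0 : k = 0 := eq_zero_of_mem_span_monomial hv hw hk <| by
    rwa [SetLike.mem_coe, LinearMap.mem_ker, map_add, vacIdeal_le_ker hv hw hi, zero_add] at hx
  rwa [hk0, add_zero]
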